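/- For all g ∈ S_m and h ∈ S_n, the quantity Δ(g,h) := n·ind(g) + m·ind(h) − ind(g,h) is nonnegative, and Δ(g,h) ≤ m·ind(h). -/

import Mathlib

/-- The multiset of all cycle lengths of a permutation, counting fixed points as 1-cycles. -/
def fullCycleType {α : Type*} [Fintype α] [DecidableEq α] (σ : Equiv.Perm α) : Multiset ℕ :=
  σ.cycleType + Multiset.replicate (Fintype.card α - σ.support.card) 1

/-- The number of cycles of a permutation (fixed points counted as 1-cycles),
i.e. the number of orbits of the cyclic group it generates. -/
def cycleCount {α : Type*} [Fintype α] [DecidableEq α] (σ : Equiv.Perm α) : ℕ :=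
  Multiset.card (fullCycleType σ)

/-- `ind σ = N - (number of cycles of σ)` for `σ` a permutation of a set of size `N`. -/
def ind {α : Type*} [Fintype α] [DecidableEq α] (σ : Equiv.Perm α) : ℕ :=
  Fintype.card α - cycleCount σ

/-! Write `c σ` for the number of cycles of `σ`, i.e. of classes of `SameCycle σ`. Then
`Δ(g,h) = (m - c g)(n - c h) + (c (g,h) - c g * c h)` and `m ind h - Δ(g,h) = n c g - c (g,h)`, so
it suffices that `c g * c h ≤ c (g,h) ≤ n c g`. The lower bound holds because a `(g,h)`-cycle lies
over a single pair of a `g`-cycle and an `h`-cycle, and every pair occurs; the upper bound because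
every `(g,h)`-cycle over a `g`-cycle `C` meets `{x₀} × Fin n` for any fixed `x₀ ∈ C`. -/

open Function

namespace Equiv.Perm

variable {α β : Type*}

def prodCongrHom (α β : Type*) : Perm α × Perm β →* Perm (α × β) :=
  MonoidHom.mk' (fun p => p.1.prodCongr p.2) fun _ _ => rfl

theorem prodCongr_zpow (g : Perm α) (h : Perm β) (k : ℤ) :
    g.prodCongr h ^ k = (g ^ k).prodCongr (h ^ k) :=
  (map_zpow (prodCongrHom α β) (g, h) k).symm

theorem sameCycle_prodCongr_iff {g : Perm α} {h : Perm β} {x x' : α} {y y' : β} :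
    SameCycle (g.prodCongr h) (x, y) (x', y') ↔ ∃ k : ℤ, (g ^ k) x = x' ∧ (h ^ k) y = y' := by
  simp [SameCycle, prodCongr_zpow, Prod.ext_iff]

theorem SameCycle.exists_sameCycle_prodCongr {g : Perm α} {x x' : α} (hx : g.SameCycle x x')
    (h : Perm β) (y : β) : ∃ y', SameCycle (g.prodCongr h) (x, y) (x', y') :=
  let ⟨k, hk⟩ := hx
  ⟨(h ^ k) y, sameCycle_prodCongr_iff.2 ⟨k, hk, Eq.refl _⟩⟩

section Fintype

variable [Fintype α] [DecidableEq α] [Fintype β] [DecidableEq β]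

def cycleOrFixedPoint (σ : Perm α) (x : α) : σ.cycleFactorsFinset ⊕ fixedPoints σ :=
  if hx : σ x = x then .inr ⟨x, hx⟩
  else .inl ⟨σ.cycleOf x, cycleOf_mem_cycleFactorsFinset_iff.2 (mem_support.2 hx)⟩

theorem cycleOrFixedPoint_eq_iff (σ : Perm α) {x y : α} :
    cycleOrFixedPoint σ x = cycleOrFixedPoint σ y ↔ σ.SameCycle x y := by
  refine ⟨fun hxy => ?_, fun hxy => ?_⟩
  · by_cases hx : σ x = x <;> by_cases hy : σ y = y <;>
      simp only [cycleOrFixedPoint, hx, hy, dite_true, dite_false, Sum.inl.injEq, Sum.inr.injEq,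
        Subtype.mk.injEq, reduceCtorEq] at hxy
    · exact Subtype.mk.inj hxy ▸ SameCycle.rfl
    · exact (sameCycle_iff_cycleOf_eq_of_mem_support (mem_support.2 hx) (mem_support.2 hy)).2 hxy
  · by_cases hx : σ x = x
    · cases hxy.eq_of_left hx
      rfl
    · have hy : σ y ≠ y := mt hxy.apply_eq_self_iff.2 hx
      simp [cycleOrFixedPoint, hx, hy, hxy.cycleOf_eq]

theorem cycleOrFixedPoint_surjective (σ : Perm α) : Surjective (cycleOrFixedPoint σ) := by
  rintro (⟨c, hc⟩ | ⟨x, hx⟩)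
  · obtain ⟨x, hx⟩ := (mem_cycleFactorsFinset_iff.1 hc).1.nonempty_support
    have hσx : σ x ≠ x := mem_support.1 (mem_cycleFactorsFinset_support_le hc hx)
    refine ⟨x, ?_⟩
    simp [cycleOrFixedPoint, hσx, cycle_is_cycleOf hx hc]
  · exact ⟨x, by simp [cycleOrFixedPoint, show σ x = x from hx]⟩

theorem nat_card_quotient_sameCycle (σ : Perm α) :
    Nat.card (Quotient (SameCycle.setoid σ)) = cycleCount σ := by
  have hbij : Bijective (Quotient.lift (s := SameCycle.setoid σ) (cycleOrFixedPoint σ)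
      fun _ _ => (cycleOrFixedPoint_eq_iff σ).2) :=
    ⟨Quotient.ind₂ fun _ _ h => Quotient.sound ((cycleOrFixedPoint_eq_iff σ).1 h),
      (Quotient.lift_surjective_iff _ _).2 (cycleOrFixedPoint_surjective σ)⟩
  rw [Nat.card_eq_of_bijective _ hbij, Nat.card_sum, Nat.card_eq_fintype_card,
    Nat.card_eq_fintype_card, card_fixedPoints, sum_cycleType, Fintype.card_coe]
  simp [cycleCount, fullCycleType, cycleType_def]

theorem cycleCount_le_card (σ : Perm α) : cycleCount σ ≤ Fintype.card α := by
  rw [← nat_card_quotient_sameCycle, ← Nat.card_eq_fintype_card]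
  exact Nat.card_le_card_of_surjective _ Quotient.mk_surjective

theorem natCast_ind (σ : Perm α) : (ind σ : ℤ) = Fintype.card α - cycleCount σ := by
  rw [ind, Nat.cast_sub (cycleCount_le_card σ)]

theorem cycleCount_mul_cycleCount_le_cycleCount_prodCongr (g : Perm α) (h : Perm β) :
    cycleCount g * cycleCount h ≤ cycleCount (g.prodCongr h) := by
  rw [← nat_card_quotient_sameCycle, ← nat_card_quotient_sameCycle,
    ← nat_card_quotient_sameCycle, ← Nat.card_prod]
  refine Nat.card_le_card_of_surjective
    (Quotient.lift (s := SameCycle.setoid _) (fun p => (⟦p.1⟧, ⟦p.2⟧)) ?_) ?_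
  · rintro ⟨x, y⟩ ⟨x', y'⟩ hxy
    obtain ⟨k, hx, hy⟩ := sameCycle_prodCongr_iff.1 hxy
    exact Prod.ext (Quotient.sound ⟨k, hx⟩) (Quotient.sound ⟨k, hy⟩)
  · rintro ⟨⟨x⟩, ⟨y⟩⟩
    exact ⟨⟦(x, y)⟧, rfl⟩

theorem cycleCount_prodCongr_le (g : Perm α) (h : Perm β) :
    cycleCount (g.prodCongr h) ≤ cycleCount g * Fintype.card β := by
  rw [← nat_card_quotient_sameCycle, ← nat_card_quotient_sameCycle, ← Nat.card_eq_fintype_card,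
    ← Nat.card_prod]
  refine Nat.card_le_card_of_surjective
    (fun p : Quotient (SameCycle.setoid g) × β =>
      (⟦(p.1.out, p.2)⟧ : Quotient (SameCycle.setoid (g.prodCongr h)))) ?_
  rintro ⟨⟨x, y⟩⟩
  have hx : g.SameCycle x (⟦x⟧ : Quotient (SameCycle.setoid g)).out :=
    SameCycle.symm (Quotient.mk_out (s := SameCycle.setoid g) x)
  obtain ⟨y', hy'⟩ := hx.exists_sameCycle_prodCongr h y
  exact ⟨(⟦x⟧, y'), Quotient.sound hy'.symm⟩

end Fintype

end Equiv.Perm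

open Equiv.Perm in
theorem stmt_5 {m n : ℕ} (g : Equiv.Perm (Fin m)) (h : Equiv.Perm (Fin n)) :
    0 ≤ (n : ℤ) * ind g + (m : ℤ) * ind h - ind (g.prodCongr h) ∧
    (n : ℤ) * ind g + (m : ℤ) * ind h - ind (g.prodCongr h) ≤ (m : ℤ) * ind h := by
  have hg : (cycleCount g : ℤ) ≤ m := by exact_mod_cast (Fintype.card_fin m ▸ cycleCount_le_card g)
  have hh : (cycleCount h : ℤ) ≤ n := by exact_mod_cast (Fintype.card_fin n ▸ cycleCount_le_card h)
  have hlow : (cycleCount g * cycleCount h : ℤ) ≤ cycleCount (g.prodCongr h) := by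
    exact_mod_cast cycleCount_mul_cycleCount_le_cycleCount_prodCongr g h
  have hup : (cycleCount (g.prodCongr h) : ℤ) ≤ cycleCount g * n := by
    exact_mod_cast (Fintype.card_fin n ▸ cycleCount_prodCongr_le g h)
  simp only [natCast_ind, Fintype.card_prod, Fintype.card_fin, Nat.cast_mul]
  constructor
  · nlinarith [mul_nonneg (sub_nonneg.2 hg) (sub_nonneg.2 hh)]
  · linarith
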